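/- arXiv:1311.7025 — 7 statements merged into one kernel-verified Lean document; each statement's English description precedes it below -/
import Mathlib

section
/- There is no twice continuously differentiable function x : ℝ → ℝ satisfying x(t)·x''(t) + 1 = 0 for all t ∈ ℝ. In particular, the differential equation x·ẍ + 1 = 0 has no C² periodic solutions defined on all of ℝ. -/
open Set

lemma no_pos (x : ℝ → ℝ) (hx : ContDiff ℝ 2 x) (hpos : ∀ t, 0 < x t)
    (heq : ∀ t : ℝ, x t * deriv (deriv x) t + 1 = 0) : False := by
  have hdiff : Differentiable ℝ x := hx.differentiable (by norm_num)
  have hneg : ∀ t, deriv (deriv x) t < 0 := fun t => by nlinarith [heq t, hpos t]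
  have hanti : StrictAnti (deriv x) := strictAnti_of_deriv_neg hneg
  have slope : ∀ a b : ℝ, a < b → ∃ c ∈ Ioo a b, deriv x c = (x b - x a) / (b - a) := by
    intro a b hab
    exact exists_deriv_eq_slope x hab (hdiff.continuous.continuousOn) (hdiff.differentiableOn)
  by_cases hb : deriv x 1 < 0
  · have hne : deriv x 1 ≠ 0 := ne_of_lt hb
    set T : ℝ := 1 + (x 1 + 1) / (-(deriv x 1)) with hT
    have hdivpos : 0 < (x 1 + 1) / (-(deriv x 1)) :=
      div_pos (by linarith [hpos 1]) (by linarith)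
    have hT1 : 1 < T := by rw [hT]; linarith
    obtain ⟨c, hc, hcs⟩ := slope 1 T hT1
    have h1 : deriv x c < deriv x 1 := hanti hc.1
    rw [eq_div_iff (by linarith : T - 1 ≠ 0)] at hcs
    have h3 : x T < x 1 + deriv x 1 * (T - 1) := by nlinarith
    have h4 : deriv x 1 * (T - 1) = -(x 1 + 1) := by
      have : T - 1 = (x 1 + 1) / (-(deriv x 1)) := by rw [hT]; ring
      rw [this, mul_div_assoc', div_eq_iff (neg_ne_zero.mpr hne)]; ring
    nlinarith [hpos T]
  · push_neg at hb
    have hb' : 0 < deriv x (-1) := lt_of_le_of_lt hb (hanti (by norm_num))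
    have hne : deriv x (-1) ≠ 0 := ne_of_gt hb'
    set S : ℝ := -1 - (x (-1) + 1) / deriv x (-1) with hS
    have hdivpos : 0 < (x (-1) + 1) / deriv x (-1) :=
      div_pos (by linarith [hpos (-1)]) hb'
    have hS1 : S < -1 := by rw [hS]; linarith
    obtain ⟨c, hc, hcs⟩ := slope S (-1) hS1
    have h1 : deriv x (-1) < deriv x c := hanti hc.2
    rw [eq_div_iff (by linarith : (-1 : ℝ) - S ≠ 0)] at hcs
    have h3 : x (-1) - x S > deriv x (-1) * (-1 - S) := by nlinarith
    have h4 : deriv x (-1) * (-1 - S) = x (-1) + 1 := by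
      have : (-1 : ℝ) - S = (x (-1) + 1) / deriv x (-1) := by rw [hS]; ring
      rw [this, mul_div_cancel₀ _ hne]
    nlinarith [hpos S]

lemma no_sol (x : ℝ → ℝ) (hx : ContDiff ℝ 2 x)
    (heq : ∀ t : ℝ, x t * deriv (deriv x) t + 1 = 0) : False := by
  have hne : ∀ t, x t ≠ 0 := by
    intro t ht
    have := heq t
    rw [ht] at this
    norm_num at this
  have hcont : Continuous x := hx.continuous
  rcases lt_or_gt_of_ne (hne 0) with h0 | h0
  · -- x 0 < 0 : apply no_pos to -x
    have hneg : ∀ t, x t < 0 := by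
      intro t
      rcases lt_or_gt_of_ne (hne t) with h | h
      · exact h
      · exfalso
        have : (0 : ℝ) ∈ Set.Icc (x 0) (x t) := ⟨le_of_lt h0, le_of_lt h⟩
        obtain ⟨s, hs⟩ := intermediate_value_univ 0 t hcont this
        exact hne s hs
    exact no_pos (fun t => -x t) hx.neg (fun t => neg_pos.mpr (hneg t)) (by
      intro t
      have hd : deriv (fun s => -x s) = fun s => -deriv x s := funext fun s => deriv.neg
      have : deriv (deriv fun s => -x s) t = -(deriv (deriv x) t) := by
        rw [hd]; exact deriv.neg
      rw [this]
      have := heq t; ring_nf; ring_nf at this; linarith)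
  · have hpos : ∀ t, 0 < x t := by
      intro t
      rcases lt_or_gt_of_ne (hne t) with h | h
      · exfalso
        have : (0 : ℝ) ∈ Set.Icc (x t) (x 0) := ⟨le_of_lt h, le_of_lt h0⟩
        obtain ⟨s, hs⟩ := intermediate_value_univ t 0 hcont this
        exact hne s hs
      · exact h
    exact no_pos x hx hpos heq

/-- There is no `C²` function `x : ℝ → ℝ` satisfying `x·x'' + 1 = 0` on all of `ℝ`;
in particular there are no `C²` periodic solutions defined on all of `ℝ`. -/
theorem stmt_1 :
    (¬ ∃ x : ℝ → ℝ, ContDiff ℝ 2 x ∧ ∀ t : ℝ, x t * deriv (deriv x) t + 1 = 0) ∧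
    (¬ ∃ (x : ℝ → ℝ) (T : ℝ), 0 < T ∧ ContDiff ℝ 2 x ∧ (∀ t : ℝ, x (t + T) = x t) ∧
        ∀ t : ℝ, x t * deriv (deriv x) t + 1 = 0) := by
  constructor
  · rintro ⟨x, hx, heq⟩
    exact no_sol x hx heq
  · rintro ⟨x, T, -, hx, -, heq⟩
    exact no_sol x hx heq
end

section
/- For every A > 0 there exists a twice continuously differentiable function x : I_A → ℝ on the interval I_A = (−√(2π)·A/2, √(2π)·A/2) such that x(0) = A, x'(0) = 0, x(t) > 0 and x(t)·x''(t) + 1 = 0 for all t ∈ I_A, and x(t) → 0 as t → ±√(2π)·A/2. Explicitly, one may take x(t) = A·e^{−y(t)²/2}, where y(t) is the solution of y' = −e^{y²/2}/A with y(0) = 0. -/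
open Real Set Filter Topology MeasureTheory intervalIntegral

noncomputable def Fg : ℝ → ℝ := fun y => ∫ s in (0:ℝ)..y, Real.exp (-s ^ 2 / 2)

lemma fg_cont : Continuous (fun s : ℝ => Real.exp (-s ^ 2 / 2)) := by fun_prop

lemma Fg_hasDerivAt (y : ℝ) : HasDerivAt Fg (Real.exp (-y ^ 2 / 2)) y := by
  exact intervalIntegral.integral_hasDerivAt_right
    (fg_cont.intervalIntegrable _ _)
    (fg_cont.stronglyMeasurable.stronglyMeasurableAtFilter)
    fg_cont.continuousAt

lemma Fg_mono : StrictMono Fg := by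
  apply strictMono_of_deriv_pos
  intro x
  rw [(Fg_hasDerivAt x).deriv]
  exact Real.exp_pos _

lemma Fg_zero : Fg 0 = 0 := intervalIntegral.integral_same

lemma exp_neg_div (a : ℝ) : Real.exp (-a ^ 2 / 2) = (Real.exp (a ^ 2 / 2))⁻¹ := by
  rw [← Real.exp_neg]; congr 1; ring

noncomputable def cst : ℝ := Real.sqrt (2 * π) / 2

lemma cst_pos : 0 < cst := by
  have : 0 < 2 * π := by positivity
  unfold cst; positivity

lemma integrable_fg : MeasureTheory.Integrable (fun s : ℝ => Real.exp (-s ^ 2 / 2)) := by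
  have h := integrable_exp_neg_mul_sq (show (0:ℝ) < 1/2 by norm_num)
  convert h using 2 with x
  ring_nf

lemma gauss_Ioi : ∫ x in Ioi (0:ℝ), Real.exp (-x ^ 2 / 2) = cst := by
  have h := integral_gaussian_Ioi (1/2 : ℝ)
  have h2 : (fun x : ℝ => Real.exp (-(1/2) * x ^ 2)) = fun x => Real.exp (-x ^ 2 / 2) := by
    funext x; ring_nf
  rw [h2] at h
  rw [h]
  unfold cst
  congr 1
  rw [show π / (1/2 : ℝ) = 2 * π by ring]

lemma Fg_tendsto_top : Tendsto Fg atTop (𝓝 cst) := by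
  rw [← gauss_Ioi]
  exact MeasureTheory.intervalIntegral_tendsto_integral_Ioi 0
    integrable_fg.integrableOn tendsto_id

lemma gauss_Iic : ∫ x in Iic (0:ℝ), Real.exp (-x ^ 2 / 2) = cst := by
  have h := integral_comp_neg_Ioi (c := (0:ℝ)) (f := fun s : ℝ => Real.exp (-s ^ 2 / 2))
  rw [neg_zero] at h
  rw [← h, ← gauss_Ioi]
  congr 1
  funext x
  rw [neg_pow, show ((-1:ℝ))^2 = 1 by norm_num, one_mul]

lemma Fg_tendsto_bot : Tendsto Fg atBot (𝓝 (-cst)) := by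
  have h : Tendsto (fun b => ∫ x in b..(0:ℝ), Real.exp (-x ^ 2 / 2)) atBot (𝓝 cst) := by
    rw [← gauss_Iic]
    exact MeasureTheory.intervalIntegral_tendsto_integral_Iic 0
      integrable_fg.integrableOn tendsto_id
  have h2 : Fg = fun b => -∫ x in b..(0:ℝ), Real.exp (-x ^ 2 / 2) := by
    funext b; rw [Fg, intervalIntegral.integral_symm]
  rw [h2]
  exact h.neg

lemma Fg_mem (y : ℝ) : Fg y ∈ Ioo (-cst) cst := by
  constructor
  · have h1 : Fg (y - 1) < Fg y := Fg_mono (by linarith)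
    have h2 : -cst ≤ Fg (y - 1) := by
      apply le_of_tendsto Fg_tendsto_bot
      filter_upwards [eventually_le_atBot (y - 1)] with z hz
      exact (Fg_mono.le_iff_le.2 hz)
    linarith
  · have h1 : Fg y < Fg (y + 1) := Fg_mono (by linarith)
    have h2 : Fg (y + 1) ≤ cst := by
      apply ge_of_tendsto Fg_tendsto_top
      filter_upwards [eventually_ge_atTop (y + 1)] with z hz
      exact (Fg_mono.le_iff_le.2 hz)
    linarith

lemma Fg_surj : ∀ v ∈ Ioo (-cst) cst, ∃ y, Fg y = v := by
  intro v hv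
  obtain ⟨a, ha⟩ := (Fg_tendsto_bot.eventually_lt_const hv.1).exists
  obtain ⟨b, hb⟩ := (Fg_tendsto_top.eventually_const_lt hv.2).exists
  have hab : a ≤ b := le_of_lt (Fg_mono.lt_iff_lt.1 (by linarith))
  have := intermediate_value_Icc hab (fun z _ => (Fg_hasDerivAt z).continuousAt.continuousWithinAt)
  obtain ⟨y, _, hy⟩ := this ⟨le_of_lt ha, le_of_lt hb⟩
  exact ⟨y, hy⟩

noncomputable def FgIoo : ℝ → Ioo (-cst) cst := fun y => ⟨Fg y, Fg_mem y⟩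

lemma FgIoo_mono : StrictMono FgIoo := fun a b h => Fg_mono h

lemma FgIoo_surj : Function.Surjective FgIoo := by
  rintro ⟨v, hv⟩
  obtain ⟨y, hy⟩ := Fg_surj v hv
  exact ⟨y, Subtype.ext hy⟩

noncomputable def eIso : ℝ ≃o Ioo (-cst) cst :=
  StrictMono.orderIsoOfSurjective FgIoo FgIoo_mono FgIoo_surj

noncomputable def ginv (v : ℝ) : ℝ :=
  if h : v ∈ Ioo (-cst) cst then (eIso.symm ⟨v, h⟩ : ℝ) else 0

lemma ginv_left {v : ℝ} (h : v ∈ Ioo (-cst) cst) : Fg (ginv v) = v := by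
  rw [ginv, dif_pos h]
  have := eIso.apply_symm_apply ⟨v, h⟩
  have h2 : (eIso (eIso.symm ⟨v, h⟩) : ℝ) = v := by rw [this]
  exact h2

lemma ginv_zero : ginv 0 = 0 := by
  have h0 : (0:ℝ) ∈ Ioo (-cst) cst := ⟨neg_lt_zero.2 cst_pos, cst_pos⟩
  rw [ginv, dif_pos h0]
  have : (⟨(0:ℝ), h0⟩ : Ioo (-cst) cst) = FgIoo 0 := Subtype.ext (by simp [FgIoo, Fg_zero])
  rw [this]
  have := StrictMono.orderIsoOfSurjective_symm_apply_self FgIoo FgIoo_mono FgIoo_surj 0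
  rw [show eIso = StrictMono.orderIsoOfSurjective FgIoo FgIoo_mono FgIoo_surj from rfl, this]

lemma ginv_contAt {v : ℝ} (h : v ∈ Ioo (-cst) cst) : ContinuousAt ginv v := by
  have hres : ContinuousOn ginv (Ioo (-cst) cst) := by
    rw [continuousOn_iff_continuous_restrict]
    have : Set.domRestrict (Ioo (-cst) cst) ginv = fun p => (eIso.symm p : ℝ) := by
      funext p; simp only [Set.domRestrict_apply, ginv, dif_pos p.2]
    rw [this]
    exact eIso.symm.continuous
  exact hres.continuousAt (isOpen_Ioo.mem_nhds h)

/-- For every `A > 0` there is a `C²` solution `x` of `x·x'' + 1 = 0` on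
`I_A = (−√(2π)·A/2, √(2π)·A/2)` with `x 0 = A`, `x' 0 = 0`, `x > 0` on `I_A`,
and `x → 0` at both endpoints; explicitly `x t = A·e^{−y(t)²/2}` where
`y' = −e^{y²/2}/A`, `y 0 = 0`. -/
theorem stmt_3 (A : ℝ) (hA : 0 < A) :
    ∃ x : ℝ → ℝ,
      ContDiffOn ℝ 2 x (Set.Ioo (-(Real.sqrt (2 * π) * A / 2)) (Real.sqrt (2 * π) * A / 2)) ∧
      x 0 = A ∧ deriv x 0 = 0 ∧
      (∀ t ∈ Set.Ioo (-(Real.sqrt (2 * π) * A / 2)) (Real.sqrt (2 * π) * A / 2),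
        0 < x t ∧ x t * deriv (deriv x) t + 1 = 0) ∧
      Tendsto x (𝓝[<] (Real.sqrt (2 * π) * A / 2)) (𝓝 0) ∧
      Tendsto x (𝓝[>] (-(Real.sqrt (2 * π) * A / 2))) (𝓝 0) ∧
      ∃ y : ℝ → ℝ, y 0 = 0 ∧
        (∀ t ∈ Set.Ioo (-(Real.sqrt (2 * π) * A / 2)) (Real.sqrt (2 * π) * A / 2),
          HasDerivAt y (-Real.exp ((y t) ^ 2 / 2) / A) t) ∧
        (∀ t ∈ Set.Ioo (-(Real.sqrt (2 * π) * A / 2)) (Real.sqrt (2 * π) * A / 2),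
          x t = A * Real.exp (-(y t) ^ 2 / 2)) := by
  set b : ℝ := Real.sqrt (2 * π) * A / 2 with hbdef
  have hbc : b = A * cst := by rw [hbdef, cst]; ring
  have hb_pos : 0 < b := by rw [hbc]; exact mul_pos hA cst_pos
  set y : ℝ → ℝ := fun t => ginv (-t / A) with hydef
  set x : ℝ → ℝ := fun t => A * Real.exp (-(y t) ^ 2 / 2) with hxdef
  have hAne : A ≠ 0 := ne_of_gt hA
  have hmem : ∀ t ∈ Ioo (-b) b, -t / A ∈ Ioo (-cst) cst := by
    rintro t ⟨h1, h2⟩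
    rw [hbc] at h1 h2
    have h3 : t / A < cst := by rw [div_lt_iff₀ hA]; linarith
    have h4 : -cst < t / A := by rw [lt_div_iff₀ hA]; linarith
    constructor <;> rw [neg_div] <;> [linarith; linarith]
  have hFgy : ∀ t ∈ Ioo (-b) b, Fg (y t) = -t / A := fun t ht => ginv_left (hmem t ht)
  -- y 0 = 0
  have h0mem : (0:ℝ) ∈ Ioo (-b) b := ⟨neg_lt_zero.2 hb_pos, hb_pos⟩
  have hy0 : y 0 = 0 := by rw [hydef]; simp [ginv_zero]
  -- derivative of y
  have hy : ∀ t ∈ Ioo (-b) b, HasDerivAt y (-Real.exp ((y t) ^ 2 / 2) / A) t := by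
    intro t ht
    have hg : ContinuousAt y t := by
      have hinner : ContinuousAt (fun u : ℝ => -u / A) t :=
        (continuous_id.neg.div_const A).continuousAt
      exact ContinuousAt.comp (x := t) (g := ginv) (f := fun u : ℝ => -u / A)
        (ginv_contAt (hmem t ht)) hinner
    have hf : HasDerivAt (fun s => -A * Fg s) (-A * Real.exp (-(y t) ^ 2 / 2)) (y t) :=
      (Fg_hasDerivAt (y t)).const_mul (-A)
    have hf' : -A * Real.exp (-(y t) ^ 2 / 2) ≠ 0 := by
      have := Real.exp_pos (-(y t) ^ 2 / 2)
      intro hc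
      rcases mul_eq_zero.1 hc with h | h
      · exact hAne (neg_eq_zero.1 h)
      · linarith
    have hfg : ∀ᶠ u in 𝓝 t, (fun s => -A * Fg s) (y u) = u := by
      filter_upwards [isOpen_Ioo.mem_nhds ht] with u hu
      rw [hFgy u hu]; field_simp
    have := HasDerivAt.of_local_left_inverse hg hf hf' hfg
    refine this.congr_deriv ?_; symm
    rw [exp_neg_div]
    have hexp := (Real.exp_pos ((y t) ^ 2 / 2)).ne'
    field_simp
  -- derivative of x
  have hx : ∀ t ∈ Ioo (-b) b, HasDerivAt x (y t) t := by
    intro t ht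
    have h1 : HasDerivAt (fun u => -(y u) ^ 2 / 2)
        (-(2 * y t ^ 1 * (-Real.exp ((y t) ^ 2 / 2) / A)) / 2) t :=
      (((hy t ht).pow 2).neg).div_const 2
    have h2 : HasDerivAt x
        (A * (Real.exp (-(y t) ^ 2 / 2) * (-(2 * y t ^ 1 * (-Real.exp ((y t) ^ 2 / 2) / A)) / 2))) t :=
      (h1.exp).const_mul A
    convert h2 using 1
    rw [exp_neg_div]
    have hexp := (Real.exp_pos ((y t) ^ 2 / 2)).ne'
    field_simp
  have hderiv_x : ∀ t ∈ Ioo (-b) b, deriv x t = y t := fun t ht => (hx t ht).deriv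
  have hderiv2 : ∀ t ∈ Ioo (-b) b, deriv (deriv x) t = -Real.exp ((y t) ^ 2 / 2) / A := by
    intro t ht
    have heq : deriv x =ᶠ[𝓝 t] y := by
      filter_upwards [isOpen_Ioo.mem_nhds ht] with u hu
      exact hderiv_x u hu
    rw [heq.deriv_eq]
    exact (hy t ht).deriv
  have hycont : ContinuousOn y (Ioo (-b) b) :=
    fun t ht => ((hy t ht).continuousAt).continuousWithinAt
  refine ⟨x, ?_, ?_, ?_, ?_, ?_, ?_, y, hy0, hy, fun t _ => rfl⟩
  · -- ContDiffOn 2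
    have h2 : (2 : WithTop ℕ∞) = 1 + 1 := by norm_num
    rw [h2, contDiffOn_succ_iff_deriv_of_isOpen isOpen_Ioo]
    refine ⟨fun t ht => (hx t ht).differentiableAt.differentiableWithinAt, by simp, ?_⟩
    have hy1 : ContDiffOn ℝ 1 y (Ioo (-b) b) := by
      rw [show (1 : WithTop ℕ∞) = 0 + 1 by norm_num,
        contDiffOn_succ_iff_deriv_of_isOpen isOpen_Ioo]
      refine ⟨fun t ht => (hy t ht).differentiableAt.differentiableWithinAt, by simp, ?_⟩
      rw [contDiffOn_zero]
      have hform : ContinuousOn (fun t => -Real.exp ((y t) ^ 2 / 2) / A) (Ioo (-b) b) := by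
        apply ContinuousOn.div_const
        apply ContinuousOn.neg
        exact (Real.continuous_exp.comp_continuousOn ((hycont.pow 2).div_const 2))
      exact hform.congr (fun t ht => (hy t ht).deriv)
    exact hy1.congr hderiv_x
  · rw [hxdef]; simp [hy0]
  · rw [hderiv_x 0 h0mem, hy0]
  · intro t ht
    constructor
    · exact mul_pos hA (Real.exp_pos _)
    · rw [hderiv2 t ht, hxdef]
      simp only
      rw [exp_neg_div]
      have hexp := (Real.exp_pos ((y t) ^ 2 / 2)).ne'
      field_simp
      ring
  · -- Tendsto x (𝓝[<] b) (𝓝 0)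
    have hyT : Tendsto y (𝓝[<] b) atBot := by
      rw [tendsto_atBot]
      intro M
      have hmemev : ∀ᶠ t in 𝓝[<] b, t ∈ Ioo (-b) b :=
        Ioo_mem_nhdsLT_of_mem ⟨by linarith, le_refl b⟩
      have htend : Tendsto (fun t : ℝ => -t / A) (𝓝[<] b) (𝓝 (-cst)) := by
        have : Tendsto (fun t : ℝ => -t / A) (𝓝 b) (𝓝 (-b / A)) :=
          (continuous_id.neg.div_const A).tendsto b
        have hbcA : -b / A = -cst := by rw [hbc]; field_simp
        rw [hbcA] at this
        exact this.mono_left nhdsWithin_le_nhds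
      have hev : ∀ᶠ t in 𝓝[<] b, -t / A < Fg M :=
        htend.eventually_lt_const (Fg_mem M).1
      filter_upwards [hmemev, hev] with t ht hlt
      have : Fg (y t) < Fg M := by rw [hFgy t ht]; exact hlt
      exact le_of_lt (Fg_mono.lt_iff_lt.1 this)
    have hsq : Tendsto (fun t => -(y t) ^ 2 / 2) (𝓝[<] b) atBot := by
      have hneg : Tendsto (fun t => -(y t)) (𝓝[<] b) atTop := tendsto_neg_atBot_atTop.comp hyT
      have h1 : Tendsto (fun t => (y t) ^ 2) (𝓝[<] b) atTop := by
        have h1' := (tendsto_pow_atTop two_ne_zero).comp hneg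
        simpa [Function.comp_def, neg_sq] using h1'
      exact (tendsto_neg_atTop_atBot.comp h1).atBot_div_const (by norm_num)
    have : Tendsto x (𝓝[<] b) (𝓝 (A * 0)) :=
      (Real.tendsto_exp_atBot.comp hsq).const_mul A
    rwa [mul_zero] at this
  · -- Tendsto x (𝓝[>] (-b)) (𝓝 0)
    have hyT : Tendsto y (𝓝[>] (-b)) atTop := by
      rw [tendsto_atTop]
      intro M
      have hmemev : ∀ᶠ t in 𝓝[>] (-b), t ∈ Ioo (-b) b :=
        Ioo_mem_nhdsGT_of_mem ⟨le_refl (-b), by linarith⟩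
      have htend : Tendsto (fun t : ℝ => -t / A) (𝓝[>] (-b)) (𝓝 cst) := by
        have : Tendsto (fun t : ℝ => -t / A) (𝓝 (-b)) (𝓝 (-(-b) / A)) :=
          (continuous_id.neg.div_const A).tendsto (-b)
        have hbcA : -(-b) / A = cst := by rw [hbc]; field_simp
        rw [hbcA] at this
        exact this.mono_left nhdsWithin_le_nhds
      have hev : ∀ᶠ t in 𝓝[>] (-b), Fg M < -t / A :=
        htend.eventually_const_lt (Fg_mem M).2
      filter_upwards [hmemev, hev] with t ht hlt
      have : Fg M < Fg (y t) := by rw [hFgy t ht]; exact hlt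
      exact le_of_lt (Fg_mono.lt_iff_lt.1 this)
    have hsq : Tendsto (fun t => -(y t) ^ 2 / 2) (𝓝[>] (-b)) atBot := by
      have h1 : Tendsto (fun t => (y t) ^ 2) (𝓝[>] (-b)) atTop := by
        have h1' := (tendsto_pow_atTop two_ne_zero).comp hyT
        simpa [Function.comp_def] using h1'
      exact (tendsto_neg_atTop_atBot.comp h1).atBot_div_const (by norm_num)
    have : Tendsto x (𝓝[>] (-b)) (𝓝 (A * 0)) :=
      (Real.tendsto_exp_atBot.comp hsq).const_mul A
    rwa [mul_zero] at this
end

section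
/- For every A > 0, set T = 2·√(2π)·A. There exists a continuous function φ : ℝ → ℝ such that: (1) φ(t + T) = φ(t) for all t ∈ ℝ; (2) φ(0) = A; (3) φ(t) = 0 exactly at the points t = (2n+1)·√(2π)·A/2, n ∈ ℤ; and (4) φ is twice differentiable and satisfies φ(t)·φ''(t) + 1 = 0 at every t ∈ ℝ outside the set {(2n+1)·√(2π)·A/2 : n ∈ ℤ}. Thus x·ẍ + 1 = 0 has a continuous weak periodic solution of period T(A) = 2·√(2π)·A. -/
open Real Set Filter Topology MeasureTheory

noncomputable section StmtAux4

/-- Half-period length. -/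
private def LL (A : ℝ) : ℝ := Real.sqrt (2 * π) * A / 2

private lemma LL_pos {A : ℝ} (hA : 0 < A) : 0 < LL A := by
  have h2 : (0:ℝ) < Real.sqrt (2 * π) := Real.sqrt_pos.2 (by positivity)
  unfold LL; positivity

/-- The "time as a function of phase" map. -/
private def gf (A : ℝ) (u : ℝ) : ℝ := A * ∫ s in (0:ℝ)..u, Real.exp (-s ^ 2 / 2)

private lemma cont_integrand : Continuous fun s : ℝ => Real.exp (-s ^ 2 / 2) := by
  fun_prop

private lemma gf_hasDerivAt (A u : ℝ) :
    HasDerivAt (gf A) (A * Real.exp (-u ^ 2 / 2)) u := by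
  have h := intervalIntegral.integral_hasDerivAt_right
    (cont_integrand.intervalIntegrable 0 u)
    (cont_integrand.stronglyMeasurable.stronglyMeasurableAtFilter)
    cont_integrand.continuousAt
  exact h.const_mul A

private lemma gf_cont (A : ℝ) : Continuous (gf A) :=
  continuous_iff_continuousAt.2 fun u => (gf_hasDerivAt A u).continuousAt

private lemma gf_zero (A : ℝ) : gf A 0 = 0 := by simp [gf]

private lemma gf_mono {A : ℝ} (hA : 0 < A) : StrictMono (gf A) := by
  apply strictMono_of_deriv_pos
  intro u
  rw [(gf_hasDerivAt A u).deriv]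
  positivity

private lemma integral_half_gaussian :
    ∫ s in Ioi (0:ℝ), Real.exp (-s ^ 2 / 2) = Real.sqrt (2 * π) / 2 := by
  have h : (fun s : ℝ => Real.exp (-s ^ 2 / 2)) = fun s => Real.exp (-(2⁻¹) * s ^ 2) := by
    funext s; ring_nf
  rw [h, integral_gaussian_Ioi]
  norm_num [mul_comm]

private lemma gf_tendsto_top (A : ℝ) : Tendsto (gf A) atTop (𝓝 (LL A)) := by
  have hi : IntegrableOn (fun s : ℝ => Real.exp (-s ^ 2 / 2)) (Ioi 0) := by
    have h : (fun s : ℝ => Real.exp (-s ^ 2 / 2)) = fun s => Real.exp (-(2⁻¹) * s ^ 2) := by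
      funext s; ring_nf
    rw [h]; exact (integrable_exp_neg_mul_sq (by norm_num)).integrableOn
  have h := MeasureTheory.intervalIntegral_tendsto_integral_Ioi 0 hi tendsto_id
  rw [integral_half_gaussian] at h
  have h2 := h.const_mul A
  have h3 : LL A = A * (Real.sqrt (2 * π) / 2) := by unfold LL; ring
  rw [h3]
  exact h2

private lemma gf_neg (A u : ℝ) : gf A (-u) = -gf A u := by
  unfold gf
  rw [← mul_neg]
  congr 1
  have heven : ∀ x : ℝ, Real.exp (-(-x) ^ 2 / 2) = Real.exp (-x ^ 2 / 2) := by
    intro x; ring_nf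
  have h1 := intervalIntegral.integral_comp_neg (a := (0:ℝ)) (b := u)
    (fun x => Real.exp (-x ^ 2 / 2))
  simp only [heven, neg_zero] at h1
  rw [intervalIntegral.integral_symm, ← h1]

private lemma gf_tendsto_bot (A : ℝ) : Tendsto (gf A) atBot (𝓝 (-LL A)) := by
  have h : ∀ u, gf A u = -gf A (-u) := fun u => by rw [gf_neg, neg_neg]
  have h2 : Tendsto (fun u => -gf A (-u)) atBot (𝓝 (-LL A)) :=
    ((gf_tendsto_top A).comp tendsto_neg_atBot_atTop).neg
  exact h2.congr fun u => (h u).symm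

private lemma gf_mem {A : ℝ} (hA : 0 < A) (u : ℝ) : gf A u ∈ Ioo (-LL A) (LL A) := by
  constructor
  · have h1 : -LL A ≤ gf A (u - 1) :=
      (gf_mono hA).monotone.le_of_tendsto (gf_tendsto_bot A) (u - 1)
    have h2 : gf A (u - 1) < gf A u := (gf_mono hA) (by linarith)
    linarith
  · have h1 : gf A (u + 1) ≤ LL A :=
      (gf_mono hA).monotone.ge_of_tendsto (gf_tendsto_top A) (u + 1)
    have h2 : gf A u < gf A (u + 1) := (gf_mono hA) (by linarith)
    linarith

private lemma gf_surj {A : ℝ} (hA : 0 < A) {y : ℝ} (hy : y ∈ Ioo (-LL A) (LL A)) :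
    ∃ u, gf A u = y := by
  obtain ⟨a, ha⟩ := ((gf_tendsto_bot A).eventually_lt_const hy.1).exists
  obtain ⟨b, hb⟩ := ((gf_tendsto_top A).eventually_const_lt hy.2).exists
  have := intermediate_value_univ a b (gf_cont A)
  exact this ⟨ha.le, hb.le⟩

/-- Phase as a function of time, inverse of `gf`. -/
private def uf (A : ℝ) : ℝ → ℝ := Function.invFun (gf A)

private lemma uf_gf {A : ℝ} (hA : 0 < A) (u : ℝ) : uf A (gf A u) = u :=
  Function.leftInverse_invFun (gf_mono hA).injective u

private lemma gf_uf {A : ℝ} (hA : 0 < A) {t : ℝ} (ht : t ∈ Ioo (-LL A) (LL A)) :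
    gf A (uf A t) = t :=
  Function.invFun_eq (gf_surj hA ht)

private lemma uf_monoOn {A : ℝ} (hA : 0 < A) :
    StrictMonoOn (uf A) (Ioo (-LL A) (LL A)) := by
  intro a ha b hb hab
  have h : gf A (uf A a) < gf A (uf A b) := by
    rw [gf_uf hA ha, gf_uf hA hb]; exact hab
  exact (gf_mono hA).lt_iff_lt.1 h

private lemma uf_image {A : ℝ} (hA : 0 < A) :
    uf A '' Ioo (-LL A) (LL A) = univ := by
  ext v
  simp only [mem_univ, iff_true, mem_image]
  exact ⟨gf A v, gf_mem hA v, uf_gf hA v⟩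

private lemma uf_contAt {A : ℝ} (hA : 0 < A) {t : ℝ} (ht : t ∈ Ioo (-LL A) (LL A)) :
    ContinuousAt (uf A) t := by
  apply (uf_monoOn hA).continuousAt_of_image_mem_nhds (isOpen_Ioo.mem_nhds ht)
  rw [uf_image hA]
  exact univ_mem

/-- The solution on the central arch. -/
private def xf (A : ℝ) (t : ℝ) : ℝ := A * Real.exp (-uf A t ^ 2 / 2)

private lemma xf_pos {A : ℝ} (hA : 0 < A) (t : ℝ) : 0 < xf A t := by
  unfold xf; positivity

private lemma uf_hasDerivAt {A : ℝ} (hA : 0 < A) {t : ℝ} (ht : t ∈ Ioo (-LL A) (LL A)) :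
    HasDerivAt (uf A) (xf A t)⁻¹ t := by
  have hne : A * Real.exp (-uf A t ^ 2 / 2) ≠ 0 := by positivity
  have h := HasDerivAt.of_local_left_inverse (uf_contAt hA ht)
    (gf_hasDerivAt A (uf A t)) hne
    (eventually_of_mem (isOpen_Ioo.mem_nhds ht) fun y hy => gf_uf hA hy)
  exact h

private lemma xf_hasDerivAt {A : ℝ} (hA : 0 < A) {t : ℝ} (ht : t ∈ Ioo (-LL A) (LL A)) :
    HasDerivAt (xf A) (-uf A t) t := by
  have hne : xf A t ≠ 0 := (xf_pos hA t).ne'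
  have h1 := uf_hasDerivAt hA ht
  have h2 := ((h1.pow 2).neg.div_const 2).exp.const_mul A
  have hfun : (fun y => A * Real.exp (-uf A y ^ 2 / 2)) = xf A := rfl
  simp only [Pi.pow_apply, Pi.neg_apply] at h2
  rw [hfun] at h2
  refine h2.congr_deriv ?_
  have he : Real.exp (-uf A t ^ 2 / 2) ≠ 0 := Real.exp_ne_zero _
  have hx : xf A t = A * Real.exp (-uf A t ^ 2 / 2) := rfl
  rw [hx]
  push_cast
  field_simp

private lemma uf_zero {A : ℝ} (hA : 0 < A) : uf A 0 = 0 := by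
  have := uf_gf hA 0
  rwa [gf_zero] at this

private lemma uf_neg {A : ℝ} (hA : 0 < A) {t : ℝ} (ht : t ∈ Ioo (-LL A) (LL A)) :
    uf A (-t) = -uf A t := by
  have hmem : -t ∈ Ioo (-LL A) (LL A) := ⟨by linarith [ht.2], by linarith [ht.1]⟩
  apply (gf_mono hA).injective
  rw [gf_uf hA hmem, gf_neg, gf_uf hA ht]

/-- The solution on the central arch, extended by zero. -/
private def xe (A : ℝ) (t : ℝ) : ℝ :=
  if t ∈ Ioo (-LL A) (LL A) then xf A t else 0

private lemma xe_even {A : ℝ} (hA : 0 < A) (t : ℝ) : xe A (-t) = xe A t := by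
  unfold xe
  by_cases ht : t ∈ Ioo (-LL A) (LL A)
  · have hmem : -t ∈ Ioo (-LL A) (LL A) := ⟨by linarith [ht.2], by linarith [ht.1]⟩
    rw [if_pos ht, if_pos hmem]
    unfold xf
    rw [uf_neg hA ht]
    ring_nf
  · have hmem : -t ∉ Ioo (-LL A) (LL A) := by
      intro h
      exact ht ⟨by linarith [h.2], by linarith [h.1]⟩
    rw [if_neg ht, if_neg hmem]

private lemma xe_nonneg {A : ℝ} (hA : 0 < A) (t : ℝ) : 0 ≤ xe A t := by
  unfold xe
  split
  · exact (xf_pos hA t).le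
  · exact le_refl 0

private lemma xe_tendsto_L {A : ℝ} (hA : 0 < A) :
    Tendsto (xe A) (𝓝 (LL A)) (𝓝 0) := by
  rw [NormedAddCommGroup.tendsto_nhds_zero]
  intro ε hε
  have hlim : Tendsto (fun M : ℝ => A * Real.exp (-M ^ 2 / 2)) atTop (𝓝 (A * 0)) := by
    apply Tendsto.const_mul
    apply Real.tendsto_exp_atBot.comp
    have : Tendsto (fun M : ℝ => M ^ 2) atTop atTop := tendsto_pow_atTop (by norm_num)
    exact (tendsto_neg_atBot_iff.2 this).atBot_div_const (by norm_num)
  rw [mul_zero] at hlim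
  obtain ⟨M, hM⟩ := ((hlim.eventually_lt_const hε).and (eventually_ge_atTop 0)).exists
  filter_upwards [eventually_gt_nhds (gf_mem hA M).2] with r hr
  rw [Real.norm_eq_abs, abs_of_nonneg (xe_nonneg hA r)]
  unfold xe
  split
  case isTrue hrI =>
    have hur : M < uf A r := by
      have : gf A M < gf A (uf A r) := by rwa [gf_uf hA hrI]
      exact (gf_mono hA).lt_iff_lt.1 this
    have hsq : M ^ 2 ≤ uf A r ^ 2 := by nlinarith [hM.2]
    have : xf A r ≤ A * Real.exp (-M ^ 2 / 2) := by
      unfold xf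
      have := Real.exp_le_exp.2 (show -uf A r ^ 2 / 2 ≤ -M ^ 2 / 2 by linarith)
      nlinarith
    linarith [hM.1]
  case isFalse => exact hε

private lemma xe_tendsto_negL {A : ℝ} (hA : 0 < A) :
    Tendsto (xe A) (𝓝 (-LL A)) (𝓝 0) := by
  have hneg : Tendsto (fun r : ℝ => -r) (𝓝 (-LL A)) (𝓝 (LL A)) := by
    have := (continuous_neg (G := ℝ)).tendsto (-LL A)
    rwa [neg_neg] at this
  have h := (xe_tendsto_L hA).comp hneg
  exact h.congr fun r => xe_even hA r

/-- Index of the arch containing `t`. -/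
private def nn (A : ℝ) (t : ℝ) : ℤ := round (t / (2 * LL A))

/-- Position within the arch. -/
private def ss (A : ℝ) (t : ℝ) : ℝ := t - 2 * LL A * nn A t

/-- The glued global weak solution. -/
private def phi (A : ℝ) (t : ℝ) : ℝ := (-1 : ℝ) ^ nn A t * xe A (ss A t)

private lemma ss_abs_le {A : ℝ} (hA : 0 < A) (t : ℝ) : |ss A t| ≤ LL A := by
  have hL := LL_pos hA
  have h := abs_sub_round (t / (2 * LL A))
  have hss : ss A t = 2 * LL A * (t / (2 * LL A) - nn A t) := by
    unfold ss
    field_simp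
  rw [hss, abs_mul, abs_of_pos (by linarith : (0:ℝ) < 2 * LL A)]
  calc 2 * LL A * |t / (2 * LL A) - ↑(nn A t)| ≤ 2 * LL A * (1 / 2) := by
        apply mul_le_mul_of_nonneg_left h (by linarith)
    _ = LL A := by ring

private lemma nn_eq {A : ℝ} (hA : 0 < A) {t : ℝ} {k : ℤ}
    (h1 : (2 * (k : ℝ) - 1) * LL A < t) (h2 : t < (2 * (k : ℝ) + 1) * LL A) :
    nn A t = k := by
  have hL := LL_pos hA
  have h2L : (0:ℝ) < 2 * LL A := by linarith
  have key1 : (k:ℝ) - 1/2 < t / (2 * LL A) := by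
    rw [lt_div_iff₀ h2L]; nlinarith
  have key2 : t / (2 * LL A) < (k:ℝ) + 1/2 := by
    rw [div_lt_iff₀ h2L]; nlinarith
  unfold nn
  rw [round_eq, Int.floor_eq_iff]
  constructor
  · linarith
  · push_cast; linarith

private lemma ss_boundary {A : ℝ} (hA : 0 < A) {t : ℝ}
    (h : ss A t ∉ Ioo (-LL A) (LL A)) : ss A t = LL A ∨ ss A t = -LL A := by
  have habs := ss_abs_le hA t
  rw [abs_le] at habs
  simp only [mem_Ioo, not_and_or, not_lt] at h
  rcases h with h | h
  · right; linarith
  · left; linarith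

private lemma phi_zero_iff {A : ℝ} (hA : 0 < A) (t : ℝ) :
    phi A t = 0 ↔ ss A t = LL A ∨ ss A t = -LL A := by
  unfold phi
  constructor
  · intro h
    rcases mul_eq_zero.1 h with h | h
    · exact absurd h (zpow_ne_zero _ (by norm_num))
    · unfold xe at h
      by_cases hm : ss A t ∈ Ioo (-LL A) (LL A)
      · rw [if_pos hm] at h; exact absurd h (xf_pos hA _).ne'
      · exact ss_boundary hA hm
  · intro h
    have hm : ss A t ∉ Ioo (-LL A) (LL A) := by
      rcases h with h | h <;> rw [h]
      · exact fun hmem => absurd hmem.2 (lt_irrefl _)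
      · exact fun hmem => absurd hmem.1 (lt_irrefl _)
    unfold xe
    rw [if_neg hm, mul_zero]

private lemma bad_iff {A : ℝ} (hA : 0 < A) (t : ℝ) :
    (∃ n : ℤ, t = (2 * (n : ℝ) + 1) * (Real.sqrt (2 * π) * A / 2))
      ↔ (ss A t = LL A ∨ ss A t = -LL A) := by
  have hL := LL_pos hA
  have hLL : Real.sqrt (2 * π) * A / 2 = LL A := rfl
  constructor
  · rintro ⟨m, rfl⟩
    rw [hLL]
    right
    have h2L : (0:ℝ) < 2 * LL A := by linarith
    have hn : nn A ((2 * (m:ℝ) + 1) * LL A) = m + 1 := by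
      unfold nn
      have hq : (2 * (m:ℝ) + 1) * LL A / (2 * LL A) = (m:ℝ) + 1/2 := by
        field_simp
      rw [hq, round_eq]
      have hq2 : (m:ℝ) + 1/2 + 1/2 = ((m+1 : ℤ) : ℝ) := by push_cast; ring
      rw [hq2, Int.floor_intCast]
    unfold ss
    rw [hn]
    push_cast
    ring
  · intro h
    rcases h with h | h
    · refine ⟨nn A t, ?_⟩
      unfold ss at h
      rw [hLL]
      linear_combination h
    · refine ⟨nn A t - 1, ?_⟩
      unfold ss at h
      rw [hLL]
      push_cast
      linear_combination h

private lemma nn_add {A : ℝ} (hA : 0 < A) (t : ℝ) :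
    nn A (t + 2 * Real.sqrt (2 * π) * A) = nn A t + 2 := by
  have hL := LL_pos hA
  have h4 : 2 * Real.sqrt (2 * π) * A = 4 * LL A := by unfold LL; ring
  unfold nn
  rw [h4]
  have hq : (t + 4 * LL A) / (2 * LL A) = t / (2 * LL A) + ((2:ℤ):ℝ) := by
    push_cast
    field_simp
    ring
  rw [hq, round_add_intCast]

private lemma phi_periodic {A : ℝ} (hA : 0 < A) (t : ℝ) :
    phi A (t + 2 * Real.sqrt (2 * π) * A) = phi A t := by
  have hnn := nn_add hA t
  have hss : ss A (t + 2 * Real.sqrt (2 * π) * A) = ss A t := by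
    unfold ss
    rw [hnn]
    have h4 : 2 * Real.sqrt (2 * π) * A = 4 * LL A := by unfold LL; ring
    rw [h4]
    push_cast
    ring
  unfold phi
  rw [hnn, hss, zpow_add₀ (by norm_num : (-1:ℝ) ≠ 0)]
  norm_num

private lemma phi_zero_val {A : ℝ} (hA : 0 < A) : phi A 0 = A := by
  have hL := LL_pos hA
  have hn : nn A 0 = 0 := by unfold nn; simp
  have hs : ss A 0 = 0 := by unfold ss; rw [hn]; push_cast; ring
  unfold phi
  rw [hn, hs]
  have h0 : (0:ℝ) ∈ Ioo (-LL A) (LL A) := ⟨by linarith, hL⟩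
  unfold xe
  rw [if_pos h0]
  unfold xf
  rw [uf_zero hA]
  norm_num

private lemma phi_good {A : ℝ} (hA : 0 < A) {t₀ : ℝ}
    (h : ss A t₀ ∈ Ioo (-LL A) (LL A)) :
    HasDerivAt (phi A) ((-1:ℝ) ^ nn A t₀ * -uf A (ss A t₀)) t₀ ∧
    HasDerivAt (deriv (phi A)) ((-1:ℝ) ^ nn A t₀ * -(xf A (ss A t₀))⁻¹) t₀ ∧
    phi A t₀ = (-1:ℝ) ^ nn A t₀ * xf A (ss A t₀) := by
  have hL := LL_pos hA
  set k : ℤ := nn A t₀ with hk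
  set c : ℝ := 2 * LL A * k with hc
  have hssdef : ss A t₀ = t₀ - c := rfl
  set U : Set ℝ := Ioo ((2 * (k:ℝ) - 1) * LL A) ((2 * (k:ℝ) + 1) * LL A) with hU
  have ht₀U : t₀ ∈ U := by
    constructor
    · have := h.1
      rw [hssdef, hc] at this
      nlinarith
    · have := h.2
      rw [hssdef, hc] at this
      nlinarith
  have hUopen : IsOpen U := isOpen_Ioo
  have hUnhds : U ∈ 𝓝 t₀ := hUopen.mem_nhds ht₀U
  have hmemU : ∀ t ∈ U, (t - c) ∈ Ioo (-LL A) (LL A) ∧ nn A t = k ∧ ss A t = t - c := by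
    intro t ht
    have h1 : (t - c) ∈ Ioo (-LL A) (LL A) := by
      constructor
      · have := ht.1; rw [hc]; nlinarith
      · have := ht.2; rw [hc]; nlinarith
    have h2 : nn A t = k := nn_eq hA ht.1 ht.2
    exact ⟨h1, h2, by unfold ss; rw [h2]⟩
  have hshift : ∀ t : ℝ, HasDerivAt (fun t : ℝ => t - c) 1 t :=
    fun t => (hasDerivAt_id t).sub_const c
  have hxf_shift : ∀ t ∈ U, HasDerivAt (fun t => xf A (t - c)) (-uf A (t - c)) t := by
    intro t ht
    have := (xf_hasDerivAt hA (hmemU t ht).1).comp t (hshift t)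
    simpa [Function.comp_def] using this
  have hψ1 : ∀ t ∈ U, HasDerivAt (fun t => (-1:ℝ) ^ k * xf A (t - c))
      ((-1:ℝ) ^ k * -uf A (t - c)) t :=
    fun t ht => (hxf_shift t ht).const_mul _
  have huf_shift : ∀ t ∈ U, HasDerivAt (fun t => -uf A (t - c)) (-(xf A (t - c))⁻¹) t := by
    intro t ht
    have := ((uf_hasDerivAt hA (hmemU t ht).1).comp t (hshift t)).neg
    simpa [Function.comp_def, Pi.neg_def] using this
  have hψ2 : HasDerivAt (fun t => (-1:ℝ) ^ k * -uf A (t - c))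
      ((-1:ℝ) ^ k * -(xf A (t₀ - c))⁻¹) t₀ :=
    (huf_shift t₀ ht₀U).const_mul _
  have hEq : phi A =ᶠ[𝓝 t₀] fun t => (-1:ℝ) ^ k * xf A (t - c) := by
    filter_upwards [hUnhds] with t ht
    obtain ⟨hm1, hm2, hm3⟩ := hmemU t ht
    unfold phi
    rw [hm2, hm3]
    unfold xe
    rw [if_pos hm1]
  have h1 : HasDerivAt (phi A) ((-1:ℝ) ^ k * -uf A (ss A t₀)) t₀ := by
    rw [hssdef]
    exact (hψ1 t₀ ht₀U).congr_of_eventuallyEq hEq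
  have hderivEq : deriv (phi A) =ᶠ[𝓝 t₀] fun t => (-1:ℝ) ^ k * -uf A (t - c) := by
    refine hEq.deriv.trans ?_
    filter_upwards [hUnhds] with t ht
    exact (hψ1 t ht).deriv
  have h2 : HasDerivAt (deriv (phi A)) ((-1:ℝ) ^ k * -(xf A (ss A t₀))⁻¹) t₀ := by
    rw [hssdef]
    exact hψ2.congr_of_eventuallyEq hderivEq
  have h3 : phi A t₀ = (-1:ℝ) ^ k * xf A (ss A t₀) := by
    rw [hEq.self_of_nhds, hssdef]
  exact ⟨h1, h2, h3⟩

private lemma phi_cont {A : ℝ} (hA : 0 < A) : Continuous (phi A) := by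
  rw [continuous_iff_continuousAt]
  intro t₀
  by_cases hgood : ss A t₀ ∈ Ioo (-LL A) (LL A)
  · exact (phi_good hA hgood).1.differentiableAt.continuousAt
  · have hL := LL_pos hA
    have hbd := ss_boundary hA hgood
    have hzero : phi A t₀ = 0 := (phi_zero_iff hA t₀).2 hbd
    obtain ⟨m, hm⟩ := (bad_iff hA t₀).2 hbd
    have hLL : Real.sqrt (2 * π) * A / 2 = LL A := rfl
    rw [hLL] at hm
    rw [Metric.continuousAt_iff]
    intro ε hε
    obtain ⟨δ₁, hδ₁pos, hδ₁⟩ := Metric.tendsto_nhds_nhds.mp (xe_tendsto_L hA) ε hε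
    obtain ⟨δ₂, hδ₂pos, hδ₂⟩ := Metric.tendsto_nhds_nhds.mp (xe_tendsto_negL hA) ε hε
    refine ⟨min (min δ₁ δ₂) (LL A), by positivity, ?_⟩
    intro t ht
    have htd : |t - t₀| < min (min δ₁ δ₂) (LL A) := by rwa [Real.dist_eq] at ht
    have htd1 : |t - t₀| < δ₁ := lt_of_lt_of_le htd (le_trans (min_le_left _ _) (min_le_left _ _))
    have htd2 : |t - t₀| < δ₂ := lt_of_lt_of_le htd (le_trans (min_le_left _ _) (min_le_right _ _))
    have htdL : |t - t₀| < LL A := lt_of_lt_of_le htd (min_le_right _ _)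
    set j : ℤ := nn A t - m with hj
    have hid : ss A t = (t - t₀) + (1 - 2*(j:ℝ)) * LL A := by
      unfold ss
      rw [hm, hj]
      push_cast
      ring
    have habs := ss_abs_le hA t
    rw [abs_le] at habs
    rw [abs_lt] at htdL
    have hxe_small : dist (xe A (ss A t)) 0 < ε := by
      have hcase : j = 0 ∨ j = 1 := by
        by_contra hcon
        push_neg at hcon
        have : j ≤ -1 ∨ 2 ≤ j := by omega
        rcases this with hjle | hjge
        · have hjr : (j:ℝ) ≤ -1 := by exact_mod_cast hjle
          nlinarith [habs.2, htdL.1]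
        · have hjr : (2:ℝ) ≤ (j:ℝ) := by exact_mod_cast hjge
          nlinarith [habs.1, htdL.2]
      rcases hcase with hj0 | hj1
      · apply hδ₁
        rw [Real.dist_eq, hid, hj0]
        push_cast
        have : t - t₀ + (1 - 2 * (0:ℝ)) * LL A - LL A = t - t₀ := by ring
        rw [this]
        exact htd1
      · apply hδ₂
        rw [Real.dist_eq, hid, hj1]
        push_cast
        have : t - t₀ + (1 - 2 * (1:ℝ)) * LL A - -LL A = t - t₀ := by ring
        rw [this]
        exact htd2
    rw [Real.dist_eq, hzero, sub_zero]
    unfold phi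
    have habs1 : |(-1:ℝ) ^ nn A t| = 1 := by
      rcases Int.even_or_odd (nn A t) with he | ho
      · rw [he.neg_one_zpow, abs_one]
      · rw [ho.neg_one_zpow, abs_neg, abs_one]
    rw [abs_mul, habs1, one_mul]
    rw [Real.dist_eq, sub_zero] at hxe_small
    exact hxe_small

end StmtAux4

/-- For every `A > 0`, with `T = 2√(2π)·A`, there is a continuous `T`-periodic
function `φ : ℝ → ℝ` with `φ 0 = A`, vanishing exactly at the points
`(2n+1)·√(2π)·A/2`, `n ∈ ℤ`, twice differentiable and satisfying
`φ·φ'' + 1 = 0` outside those points: a continuous weak periodic solution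
of `x·x'' + 1 = 0` of period `2√(2π)·A`. -/
theorem stmt_4 (A : ℝ) (hA : 0 < A) :
    ∃ φ : ℝ → ℝ,
      Continuous φ ∧
      (∀ t : ℝ, φ (t + 2 * Real.sqrt (2 * π) * A) = φ t) ∧
      φ 0 = A ∧
      (∀ t : ℝ, φ t = 0 ↔ ∃ n : ℤ, t = (2 * (n : ℝ) + 1) * (Real.sqrt (2 * π) * A / 2)) ∧
      (∀ t : ℝ, (¬ ∃ n : ℤ, t = (2 * (n : ℝ) + 1) * (Real.sqrt (2 * π) * A / 2)) →
        DifferentiableAt ℝ φ t ∧ DifferentiableAt ℝ (deriv φ) t ∧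
          φ t * deriv (deriv φ) t + 1 = 0) := by
  refine ⟨phi A, phi_cont hA, phi_periodic hA, phi_zero_val hA, ?_, ?_⟩
  · intro t
    rw [phi_zero_iff hA t]
    exact (bad_iff hA t).symm
  · intro t ht
    have hgood : ss A t ∈ Ioo (-LL A) (LL A) := by
      by_contra hc
      exact ht ((bad_iff hA t).2 (ss_boundary hA hc))
    obtain ⟨h1, h2, hval⟩ := phi_good hA hgood
    refine ⟨h1.differentiableAt, h2.differentiableAt, ?_⟩
    rw [h2.deriv, hval]
    have hx : xf A (ss A t) ≠ 0 := (xf_pos hA _).ne'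
    have hsq : ((-1:ℝ) ^ nn A t) * ((-1:ℝ) ^ nn A t) = 1 := by
      rw [← zpow_add₀ (by norm_num : (-1:ℝ) ≠ 0)]
      exact Even.neg_one_zpow ⟨nn A t, rfl⟩
    have hkey : ((-1:ℝ) ^ nn A t * xf A (ss A t)) *
        ((-1:ℝ) ^ nn A t * -(xf A (ss A t))⁻¹) = -1 := by
      calc ((-1:ℝ) ^ nn A t * xf A (ss A t)) *
          ((-1:ℝ) ^ nn A t * -(xf A (ss A t))⁻¹)
          = (((-1:ℝ) ^ nn A t) * ((-1:ℝ) ^ nn A t)) *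
            -(xf A (ss A t) * (xf A (ss A t))⁻¹) := by ring
        _ = -1 := by rw [hsq, mul_inv_cancel₀ hx]; ring
    rw [hkey]
    ring
end

section
/- Let k ≠ 0 and h ∈ ℝ. The level set {(x, y) ∈ ℝ² : y²/2 + ln(x² + k²)/2 = h} is compact. Moreover, H(x,y) = y²/2 + ln(x² + k²)/2 attains a strict global minimum at the origin, with minimum value ln(k²)/2, and H(x,y) → ∞ as |(x,y)| → ∞. -/
open Real Set Filter Topology

private lemma H_tendsto (k : ℝ) (hk : k ≠ 0) :
    Tendsto (fun p : ℝ × ℝ => p.2 ^ 2 / 2 + Real.log (p.1 ^ 2 + k ^ 2) / 2)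
      (cocompact (ℝ × ℝ)) atTop := by
  have hm : (0:ℝ) < min 1 (k ^ 2) := lt_min one_pos (by positivity)
  set m := min 1 (k ^ 2) with hm_def
  -- lower bound: H p ≥ log (m * ‖p‖²) / 2
  have key : ∀ p : ℝ × ℝ, 1 ≤ ‖p‖ → Real.log (m * ‖p‖ ^ 2) / 2 ≤
      p.2 ^ 2 / 2 + Real.log (p.1 ^ 2 + k ^ 2) / 2 := by
    intro p hp1
    obtain ⟨x, y⟩ := p
    have hnp : (0:ℝ) < ‖(x, y)‖ := lt_of_lt_of_le one_pos hp1
    have hx2 : (0:ℝ) < x ^ 2 + k ^ 2 := by positivity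
    have hy2 : (0:ℝ) < 1 + y ^ 2 := by positivity
    have h1 : Real.log (1 + y ^ 2) ≤ y ^ 2 := by
      have := Real.log_le_sub_one_of_pos hy2
      linarith
    have hnorm : ‖(x, y)‖ ^ 2 ≤ x ^ 2 + y ^ 2 := by
      have heq : ‖(x, y)‖ = max |x| |y| := rfl
      rw [heq]
      rcases le_total |x| |y| with hle | hle
      · rw [max_eq_right hle, sq_abs]; nlinarith [sq_nonneg x]
      · rw [max_eq_left hle, sq_abs]; nlinarith [sq_nonneg y]
    have hprod : m * ‖(x, y)‖ ^ 2 ≤ (x ^ 2 + k ^ 2) * (1 + y ^ 2) := by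
      have h2 : m * ‖(x, y)‖ ^ 2 ≤ m * (x ^ 2 + y ^ 2) := by nlinarith
      have h3 : m * (x ^ 2 + y ^ 2) ≤ x ^ 2 + k ^ 2 * y ^ 2 := by
        have hm1 : m ≤ 1 := min_le_left _ _
        have hm2 : m ≤ k ^ 2 := min_le_right _ _
        nlinarith [sq_nonneg x, sq_nonneg y]
      nlinarith [sq_nonneg x, sq_nonneg y, sq_nonneg (x*y), sq_nonneg k]
    have h4 : Real.log (m * ‖(x, y)‖ ^ 2) ≤
        Real.log (x ^ 2 + k ^ 2) + Real.log (1 + y ^ 2) := by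
      rw [← Real.log_mul (ne_of_gt hx2) (ne_of_gt hy2)]
      exact Real.log_le_log (mul_pos hm (pow_pos hnp 2)) hprod
    have := h4.trans (by linarith : Real.log (x ^ 2 + k ^ 2) + Real.log (1 + y ^ 2)
      ≤ Real.log (x ^ 2 + k ^ 2) + y ^ 2)
    simp only
    linarith
  have hlog : Tendsto (fun p : ℝ × ℝ => Real.log (m * ‖p‖ ^ 2) / 2)
      (cocompact (ℝ × ℝ)) atTop := by
    have h1 : Tendsto (fun p : ℝ × ℝ => ‖p‖) (cocompact (ℝ × ℝ)) atTop :=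
      tendsto_norm_cocompact_atTop
    have h2 : Tendsto (fun t : ℝ => Real.log (m * t ^ 2) / 2) atTop atTop := by
      apply Tendsto.atTop_div_const two_pos
      apply Real.tendsto_log_atTop.comp
      exact (tendsto_pow_atTop two_ne_zero).const_mul_atTop hm
    exact h2.comp h1
  have hev : ∀ᶠ p : ℝ × ℝ in cocompact (ℝ × ℝ), 1 ≤ ‖p‖ :=
    tendsto_norm_cocompact_atTop.eventually (eventually_ge_atTop 1)
  exact tendsto_atTop_mono' _ (hev.mono fun p hp => key p hp) hlog

/-- For `k ≠ 0`, every level set of `H(x,y) = y²/2 + ln(x² + k²)/2` is compact;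
`H` attains a strict global minimum at the origin with value `ln(k²)/2`, and
`H → ∞` as `|(x,y)| → ∞`. -/
theorem stmt_7 (k : ℝ) (hk : k ≠ 0) (h : ℝ) :
    IsCompact {p : ℝ × ℝ | p.2 ^ 2 / 2 + Real.log (p.1 ^ 2 + k ^ 2) / 2 = h} ∧
    (∀ p : ℝ × ℝ, p ≠ 0 →
      (0:ℝ) ^ 2 / 2 + Real.log ((0:ℝ) ^ 2 + k ^ 2) / 2
        < p.2 ^ 2 / 2 + Real.log (p.1 ^ 2 + k ^ 2) / 2) ∧
    ((0:ℝ) ^ 2 / 2 + Real.log ((0:ℝ) ^ 2 + k ^ 2) / 2 = Real.log (k ^ 2) / 2) ∧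
    Tendsto (fun p : ℝ × ℝ => p.2 ^ 2 / 2 + Real.log (p.1 ^ 2 + k ^ 2) / 2)
      (cocompact (ℝ × ℝ)) atTop := by
  have hk2 : (0:ℝ) < k ^ 2 := by positivity
  have htend := H_tendsto k hk
  refine ⟨?_, ?_, by norm_num, htend⟩
  · -- compactness of levelset
    have hev : ∀ᶠ p : ℝ × ℝ in cocompact (ℝ × ℝ),
        h < p.2 ^ 2 / 2 + Real.log (p.1 ^ 2 + k ^ 2) / 2 :=
      htend.eventually (eventually_gt_atTop h)
    obtain ⟨K, hKc, hKsub⟩ := mem_cocompact.mp hev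
    have hsub : {p : ℝ × ℝ | p.2 ^ 2 / 2 + Real.log (p.1 ^ 2 + k ^ 2) / 2 = h} ⊆ K := by
      intro p hp
      by_contra hpK
      have := hKsub hpK
      simp only [mem_setOf_eq] at this hp
      linarith
    have hcont : Continuous (fun p : ℝ × ℝ =>
        p.2 ^ 2 / 2 + Real.log (p.1 ^ 2 + k ^ 2) / 2) := by
      apply Continuous.add
      · exact ((continuous_snd.pow 2).div_const 2)
      · exact (Continuous.log ((continuous_fst.pow 2).add continuous_const)
          fun p => (by have := sq_nonneg p.1; linarith : (0:ℝ) < p.1 ^ 2 + k ^ 2).ne').div_const 2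
    exact hKc.of_isClosed_subset (isClosed_eq hcont continuous_const) hsub
  · intro p hp
    obtain ⟨x, y⟩ := p
    have hxy : x ≠ 0 ∨ y ≠ 0 := by
      by_contra hc
      push_neg at hc
      exact hp (by simp [Prod.ext_iff, hc.1, hc.2])
    have hgoal : (0:ℝ) ^ 2 / 2 + Real.log ((0:ℝ) ^ 2 + k ^ 2) / 2
        = Real.log (k ^ 2) / 2 := by norm_num
    rw [hgoal]
    rcases hxy with hx | hy
    · have hlt : Real.log (k ^ 2) < Real.log (x ^ 2 + k ^ 2) := by
        apply Real.log_lt_log hk2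
        nlinarith [sq_pos_of_pos (abs_pos.mpr hx), sq_abs x]
      have hy2 : (0:ℝ) ≤ y ^ 2 := sq_nonneg y
      simp only
      linarith
    · have hle : Real.log (k ^ 2) ≤ Real.log (x ^ 2 + k ^ 2) :=
        Real.log_le_log hk2 (by nlinarith [sq_nonneg x])
      have hy2 : (0:ℝ) < y ^ 2 := by positivity
      simp only
      linarith
end

section
/- Let k ∈ ℕ (including 0) and ω > 0. Then ∫₀^{2π/ω} cos(ω t)·(cos^{2k+1}(ω t) − ω²·cos^{2k+3}(ω t)) dt = 0 if and only if ω² = (2k+4)/(2k+3). Equivalently, the first-order harmonic balance approximation x₁(t) = A·cos(ω₁ t) to x^{2k+2}·ẍ + x^{2k+1} = 0 has frequency ω₁ = √((2k+4)/(2k+3)) and period T₁(A; 2k+1) = 2π·A·√((2k+3)/(2k+4)); together with the even case this gives T₁(A; m) = 2π·A·√((2⌊(m+1)/2⌋+1)/(2⌊(m+1)/2⌋+2)) for all m ∈ ℕ ∪ {0}. -/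
open Real Set intervalIntegral

lemma cosPowPos (n : ℕ) : 0 < ∫ x in (0:ℝ)..(2*π), Real.cos x ^ (2*n) := by
  induction n with
  | zero => simpa using two_pi_pos
  | succ n ih =>
    have h : 2 * (n+1) = 2*n + 2 := by ring
    rw [h, integral_cos_pow]
    rw [Real.sin_two_pi, Real.sin_zero]
    simp only [mul_zero, zero_mul, sub_zero, zero_div, zero_add]
    have h1 : (0:ℝ) < ((2*n:ℕ)+1)/((2*n:ℕ)+2) := by positivity
    positivity

lemma cosPowRec (n : ℕ) : (∫ x in (0:ℝ)..(2*π), Real.cos x ^ (2*n+4))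
    = ((2*n+3 : ℝ)/(2*n+4)) * ∫ x in (0:ℝ)..(2*π), Real.cos x ^ (2*n+2) := by
  have h : 2*n+4 = (2*n+2) + 2 := by ring
  rw [h, integral_cos_pow]
  rw [Real.sin_two_pi, Real.sin_zero]
  simp only [mul_zero, zero_mul, sub_zero, zero_div, zero_add]
  congr 1
  push_cast
  ring

lemma integralEq (k : ℕ) (ω : ℝ) (hω : 0 < ω) :
    (∫ t in (0:ℝ)..(2 * π / ω),
        Real.cos (ω * t) *
          ((Real.cos (ω * t)) ^ (2 * k + 1) - ω ^ 2 * (Real.cos (ω * t)) ^ (2 * k + 3)))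
    = ω⁻¹ * ((∫ x in (0:ℝ)..(2*π), Real.cos x ^ (2*k+2))
        - ω^2 * ∫ x in (0:ℝ)..(2*π), Real.cos x ^ (2*k+4)) := by
  have hne : ω ≠ 0 := hω.ne'
  have := integral_comp_mul_left (a := 0) (b := 2*π/ω)
    (f := fun x => Real.cos x * (Real.cos x ^ (2*k+1) - ω^2 * Real.cos x ^ (2*k+3))) hne
  rw [this]
  rw [mul_zero, mul_div_cancel₀ _ hne, smul_eq_mul]
  congr 1
  rw [← intervalIntegral.integral_const_mul, ← intervalIntegral.integral_sub]
  · congr 1; ext x; ring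
  all_goals apply Continuous.intervalIntegrable; fun_prop

/-- For `k ∈ ℕ` and `ω > 0`:
`∫₀^{2π/ω} cos(ωt)·(cos^{2k+1}(ωt) − ω²·cos^{2k+3}(ωt)) dt = 0` iff
`ω² = (2k+4)/(2k+3)`.  The corresponding first-order harmonic balance period is
`T₁(A;2k+1) = 2πA/ω₁ = 2πA·√((2k+3)/(2k+4))`, which, with `m = 2k+1`, matches the
general formula `T₁(A;m) = 2πA·√((2⌊(m+1)/2⌋+1)/(2⌊(m+1)/2⌋+2))`. -/
theorem stmt_12 (k : ℕ) (ω : ℝ) (hω : 0 < ω) :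
    ((∫ t in (0:ℝ)..(2 * π / ω),
        Real.cos (ω * t) *
          ((Real.cos (ω * t)) ^ (2 * k + 1) - ω ^ 2 * (Real.cos (ω * t)) ^ (2 * k + 3))) = 0
      ↔ ω ^ 2 = (2 * (k:ℝ) + 4) / (2 * (k:ℝ) + 3)) ∧
    (∀ A : ℝ, 2 * π * A / Real.sqrt ((2 * (k:ℝ) + 4) / (2 * (k:ℝ) + 3))
      = 2 * π * A * Real.sqrt ((2 * (k:ℝ) + 3) / (2 * (k:ℝ) + 4))) ∧
    (∀ A : ℝ, 2 * π * A * Real.sqrt ((2 * (k:ℝ) + 3) / (2 * (k:ℝ) + 4))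
      = 2 * π * A *
        Real.sqrt ((2 * (((2 * k + 1 + 1) / 2 : ℕ) : ℝ) + 1)
          / (2 * (((2 * k + 1 + 1) / 2 : ℕ) : ℝ) + 2))) := by
  refine ⟨?_, ?_, ?_⟩
  · set I := ∫ x in (0:ℝ)..(2*π), Real.cos x ^ (2*k+2) with hIdef
    have hI : 0 < I := by
      have := cosPowPos (k+1)
      have h : 2*(k+1) = 2*k+2 := by ring
      rwa [h] at this
    rw [integralEq k ω hω, cosPowRec k, ← hIdef]
    have h3 : (0:ℝ) < 2*(k:ℝ)+3 := by positivity
    have h4 : (0:ℝ) < 2*(k:ℝ)+4 := by positivity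
    constructor
    · intro h
      have h0 : I - ω^2 * ((2*(k:ℝ)+3)/(2*(k:ℝ)+4) * I) = 0 := by
        rcases mul_eq_zero.mp h with h' | h'
        · exact absurd h' (inv_ne_zero hω.ne')
        · exact h'
      have : I * (1 - ω^2 * ((2*(k:ℝ)+3)/(2*(k:ℝ)+4))) = 0 := by
        rw [mul_sub, mul_one]; linarith [h0]
      rcases mul_eq_zero.mp this with h' | h'
      · exact absurd h' hI.ne'
      · field_simp at h' ⊢
        linarith
    · intro h
      rw [h]
      have : (2*(k:ℝ)+4)/(2*(k:ℝ)+3) * ((2*(k:ℝ)+3)/(2*(k:ℝ)+4) * I) = I := by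
        field_simp
      rw [this, sub_self, mul_zero]
  · intro A
    have h3 : (0:ℝ) < 2*(k:ℝ)+3 := by positivity
    have h4 : (0:ℝ) < 2*(k:ℝ)+4 := by positivity
    rw [Real.sqrt_div h4.le, Real.sqrt_div h3.le]
    have s3 : (0:ℝ) < Real.sqrt (2*(k:ℝ)+3) := Real.sqrt_pos.mpr h3
    have s4 : (0:ℝ) < Real.sqrt (2*(k:ℝ)+4) := Real.sqrt_pos.mpr h4
    field_simp
  · intro A
    have h : (2*k+1+1)/2 = k+1 := by omega
    rw [h]
    push_cast
    norm_num
    left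
    congr 1 <;> ring
end

section
/- Let ω > 0, a₁, a₃ ∈ ℝ and x₂(t) = a₁·cos(ω t) + a₃·cos(3ω t). Then ∫₀^{2π/ω} (x₂(t)·x₂''(t) + 1) dt = (2π/ω)·(1 − (a₁² + 9a₃²)·ω²/2) and ∫₀^{2π/ω} cos(2ω t)·(x₂(t)·x₂''(t) + 1) dt = −(π·ω/2)·(a₁² + 10·a₁·a₃). -/
open Real



lemma hd_sin (c k t : ℝ) :
    HasDerivAt (fun x : ℝ => c * Real.sin (k * x)) (c * k * Real.cos (k * t)) t := by
  have h := (((hasDerivAt_id t).const_mul k).sin).const_mul c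
  exact h.congr_deriv (by simp only [id_eq, mul_one]; ring)

lemma sin_nat_pi (n : ℕ) : Real.sin (n * π) = 0 := by
  have := Real.sin_int_mul_pi (n : ℤ)
  push_cast at this
  exact this

lemma int_canon (ω K c₂ c₄ c₆ c₈ : ℝ) (hω : ω ≠ 0) :
    ∫ t in (0:ℝ)..(2*π/ω), (K + c₂ * Real.cos (2*ω*t) + c₄ * Real.cos (4*ω*t)
        + c₆ * Real.cos (6*ω*t) + c₈ * Real.cos (8*ω*t)) = K * (2*π/ω) := by
  have key : ∀ t : ℝ, HasDerivAt
      (fun x => K * x + c₂/(2*ω) * Real.sin (2*ω*x) + c₄/(4*ω) * Real.sin (4*ω*x)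
        + c₆/(6*ω) * Real.sin (6*ω*x) + c₈/(8*ω) * Real.sin (8*ω*x))
      (K + c₂ * Real.cos (2*ω*t) + c₄ * Real.cos (4*ω*t)
        + c₆ * Real.cos (6*ω*t) + c₈ * Real.cos (8*ω*t)) t := by
    intro t
    have hK := (hasDerivAt_id t).const_mul K
    have h := (((hK.add (hd_sin (c₂/(2*ω)) (2*ω) t)).add (hd_sin (c₄/(4*ω)) (4*ω) t)).add (hd_sin (c₆/(6*ω)) (6*ω) t)).add (hd_sin (c₈/(8*ω)) (8*ω) t)
    refine h.congr_deriv ?_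
    simp only [id_eq, mul_one]
    field_simp
  have cont : Continuous fun t : ℝ => K + c₂ * Real.cos (2*ω*t) + c₄ * Real.cos (4*ω*t)
      + c₆ * Real.cos (6*ω*t) + c₈ * Real.cos (8*ω*t) := by fun_prop
  rw [intervalIntegral.integral_eq_sub_of_hasDerivAt (fun t _ => key t)
    (cont.intervalIntegrable 0 (2*π/ω))]
  have e2 : 2*ω*(2*π/ω) = 4*π := by field_simp; ring
  have e4 : 4*ω*(2*π/ω) = 8*π := by field_simp; ring
  have e6 : 6*ω*(2*π/ω) = 12*π := by field_simp; ring
  have e8 : 8*ω*(2*π/ω) = 16*π := by field_simp; ring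
  have s4 : Real.sin (4*π) = 0 := by simpa using sin_nat_pi 4
  have s8 : Real.sin (8*π) = 0 := by simpa using sin_nat_pi 8
  have s12 : Real.sin (12*π) = 0 := by simpa using sin_nat_pi 12
  have s16 : Real.sin (16*π) = 0 := by simpa using sin_nat_pi 16
  rw [e2, e4, e6, e8, s4, s8, s12, s16]
  simp

lemma hd_cos (c k t : ℝ) :
    HasDerivAt (fun x : ℝ => c * Real.cos (k * x)) (-(c * k) * Real.sin (k * t)) t := by
  have h := (((hasDerivAt_id t).const_mul k).cos).const_mul c
  exact h.congr_deriv (by simp only [id_eq, mul_one]; ring)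

lemma dd (ω a₁ a₃ : ℝ) :
    deriv (deriv (fun t : ℝ => a₁ * Real.cos (ω * t) + a₃ * Real.cos (3 * ω * t)))
      = fun t => -(a₁ * ω ^ 2) * Real.cos (ω * t) - 9 * a₃ * ω ^ 2 * Real.cos (3 * ω * t) := by
  have h1 : deriv (fun t : ℝ => a₁ * Real.cos (ω * t) + a₃ * Real.cos (3 * ω * t))
      = fun t => -(a₁ * ω) * Real.sin (ω * t) + -(a₃ * (3 * ω)) * Real.sin (3 * ω * t) := by
    funext t
    exact ((hd_cos a₁ ω t).add (hd_cos a₃ (3 * ω) t)).deriv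
  rw [h1]
  funext t
  exact (((hd_sin (-(a₁ * ω)) ω t).add (hd_sin (-(a₃ * (3 * ω))) (3 * ω) t)).congr_deriv
    (by ring)).deriv


/-- For `x₂(t) = a₁·cos(ωt) + a₃·cos(3ωt)`, the first two Fourier coefficient
integrals of `x₂·x₂'' + 1` are
`∫₀^{2π/ω} (x₂·x₂'' + 1) dt = (2π/ω)·(1 − (a₁² + 9a₃²)ω²/2)` and
`∫₀^{2π/ω} cos(2ωt)·(x₂·x₂'' + 1) dt = −(πω/2)·(a₁² + 10a₁a₃)`. -/
theorem stmt_14 (ω a₁ a₃ : ℝ) (hω : 0 < ω) (x₂ : ℝ → ℝ)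
    (hx₂ : x₂ = fun t : ℝ => a₁ * Real.cos (ω * t) + a₃ * Real.cos (3 * ω * t)) :
    (∫ t in (0:ℝ)..(2 * π / ω), (x₂ t * deriv (deriv x₂) t + 1))
        = (2 * π / ω) * (1 - (a₁ ^ 2 + 9 * a₃ ^ 2) * ω ^ 2 / 2) ∧
    (∫ t in (0:ℝ)..(2 * π / ω), Real.cos (2 * ω * t) * (x₂ t * deriv (deriv x₂) t + 1))
        = -(π * ω / 2) * (a₁ ^ 2 + 10 * a₁ * a₃) := by
  have hω' : ω ≠ 0 := ne_of_gt hω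
  subst hx₂
  rw [dd]
  simp only
  have trig : ∀ t : ℝ,
      Real.cos (2*ω*t) = 2*Real.cos (ω*t)^2 - 1 ∧
      Real.cos (6*ω*t) = 2*Real.cos (3*ω*t)^2 - 1 ∧
      Real.cos (4*ω*t) + Real.cos (2*ω*t) = 2 * Real.cos (ω*t) * Real.cos (3*ω*t) ∧
      Real.cos (4*ω*t) = 2*Real.cos (2*ω*t)^2 - 1 ∧
      Real.cos (6*ω*t) + Real.cos (2*ω*t) = 2 * Real.cos (2*ω*t) * Real.cos (4*ω*t) ∧
      Real.cos (8*ω*t) + Real.cos (4*ω*t) = 2 * Real.cos (2*ω*t) * Real.cos (6*ω*t) := by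
    intro t
    refine ⟨?_, ?_, ?_, ?_, ?_, ?_⟩
    · rw [mul_assoc]; exact Real.cos_two_mul _
    · rw [show (6:ℝ)*ω*t = 2*(3*ω*t) by ring]; exact Real.cos_two_mul _
    · rw [show (4:ℝ)*ω*t = 3*ω*t + ω*t by ring, show (2:ℝ)*ω*t = 3*ω*t - ω*t by ring,
        Real.cos_add, Real.cos_sub]; ring
    · rw [show (4:ℝ)*ω*t = 2*(2*ω*t) by ring]; exact Real.cos_two_mul _
    · rw [show (6:ℝ)*ω*t = 4*ω*t + 2*ω*t by ring, Real.cos_add]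
      have hB := Real.cos_sub (4*ω*t) (2*ω*t)
      rw [show 4*ω*t - 2*ω*t = 2*ω*t by ring] at hB
      linear_combination hB
    · rw [show (8:ℝ)*ω*t = 6*ω*t + 2*ω*t by ring, Real.cos_add]
      have hB := Real.cos_sub (6*ω*t) (2*ω*t)
      rw [show 6*ω*t - 2*ω*t = 4*ω*t by ring] at hB
      linear_combination hB
  constructor
  · rw [intervalIntegral.integral_congr
      (g := fun t => (1 - ω^2*(a₁^2+9*a₃^2)/2)
        + (-(ω^2)*(a₁^2/2 + 5*a₁*a₃)) * Real.cos (2*ω*t)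
        + (-(ω^2)*5*a₁*a₃) * Real.cos (4*ω*t)
        + (-(ω^2)*9*a₃^2/2) * Real.cos (6*ω*t)
        + (0:ℝ) * Real.cos (8*ω*t))
      (fun t _ => by
        obtain ⟨h2, h6, hC, h4, h26, h48⟩ := trig t
        simp only
        linear_combination (ω^2*a₁^2/2)*h2 + (9*ω^2*a₃^2/2)*h6 + (5*ω^2*a₁*a₃)*hC),
      int_canon ω _ _ _ _ _ hω']
    ring
  · rw [intervalIntegral.integral_congr
      (g := fun t => (-(ω^2)*(a₁^2+10*a₁*a₃)/4)
        + (1 - ω^2*(a₁^2/2 + 5*a₁*a₃/2 + 9*a₃^2/2)) * Real.cos (2*ω*t)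
        + (-(ω^2)*(a₁^2/4 + 5*a₁*a₃/2 + 9*a₃^2/4)) * Real.cos (4*ω*t)
        + (-(ω^2)*5*a₁*a₃/2) * Real.cos (6*ω*t)
        + (-(ω^2)*9*a₃^2/4) * Real.cos (8*ω*t))
      (fun t _ => by
        obtain ⟨h2, h6, hC, h4, h26, h48⟩ := trig t
        simp only
        linear_combination (ω^2*a₁^2/2*Real.cos (2*ω*t))*h2
          + (9*ω^2*a₃^2/2*Real.cos (2*ω*t))*h6 + (5*ω^2*a₁*a₃*Real.cos (2*ω*t))*hC
          + (ω^2*(a₁^2+10*a₁*a₃)/4)*h4 + (ω^2*5*a₁*a₃/2)*h26 + (9*ω^2*a₃^2/4)*h48),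
      int_canon ω _ _ _ _ _ hω']
    field_simp
    ring
end

section
/- Suppose a₁, a₃, ω ∈ ℝ with ω > 0 satisfy 1 − (a₁² + 9a₃²)·ω²/2 = 0, a₁ + 10·a₃ = 0, and a₁ + a₃ = 1. Then a₁ = 10/9, a₃ = −1/9, and ω = 18/√218; consequently 2π/ω = (√218/9)·π. -/
open Real

/-- The second-order harmonic balance system for `x·ẍ + 1 = 0` with amplitude `1`:
if `1 − (a₁² + 9a₃²)ω²/2 = 0`, `a₁ + 10a₃ = 0`, `a₁ + a₃ = 1` and `ω > 0`, then
`a₁ = 10/9`, `a₃ = −1/9`, `ω = 18/√218`, and `2π/ω = (√218/9)·π`. -/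
theorem stmt_15 (a₁ a₃ ω : ℝ) (hω : 0 < ω)
    (h1 : 1 - (a₁ ^ 2 + 9 * a₃ ^ 2) * ω ^ 2 / 2 = 0)
    (h2 : a₁ + 10 * a₃ = 0)
    (h3 : a₁ + a₃ = 1) :
    a₁ = 10 / 9 ∧ a₃ = -(1 / 9) ∧ ω = 18 / Real.sqrt 218 ∧
      2 * π / ω = Real.sqrt 218 / 9 * π := by
  have ha3 : a₃ = -(1/9) := by linarith
  have ha1 : a₁ = 10/9 := by linarith
  have hs : Real.sqrt 218 ^ 2 = 218 := Real.sq_sqrt (by norm_num)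
  have hspos : 0 < Real.sqrt 218 := Real.sqrt_pos.2 (by norm_num)
  have hω2 : ω ^ 2 = 162 / 109 := by
    subst ha1 ha3; nlinarith [h1]
  have hωe : ω = 18 / Real.sqrt 218 := by
    have h2' : (18 / Real.sqrt 218) ^ 2 = 162 / 109 := by
      field_simp; nlinarith [hs]
    nlinarith [hω2, h2', hω.le, div_pos (by norm_num : (0:ℝ) < 18) hspos]
  refine ⟨ha1, ha3, hωe, ?_⟩
  rw [hωe]
  field_simp
  ring
end
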